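/- arXiv:2303.11119 — 4 statements merged into one kernel-verified Lean document; each statement's English description precedes it below -/
import Mathlib

section
/- Let G be a finite group acting on an abelian group A, and let m be a positive integer coprime to the order of G. Then the natural map induces an isomorphism A^G / m·A^G ≅ (A/mA)^G between the reduction mod m of the invariants and the invariants of the reduction mod m. -/
/-- The subgroup of `G`-invariant elements of a `G`-module `A`. -/
def invariantsAddSubgroup (G A : Type*) [Group G] [AddCommGroup A]
    [DistribMulAction G A] : AddSubgroup A where
  carrier := {a | ∀ g : G, g • a = a}
  zero_mem' := fun g => smul_zero g
  add_mem' := fun {a b} ha hb g => by rw [smul_add, ha g, hb g]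
  neg_mem' := fun {a} ha g => by rw [smul_neg, ha g]

/-- The subgroup `m·A` of `m`-th multiples of a commutative group `A`. -/
def multiplesAddSubgroup (m : ℕ) (A : Type*) [AddCommGroup A] : AddSubgroup A :=
  (m • AddMonoidHom.id A).range

lemma mem_multiples_iff (m : ℕ) {A : Type*} [AddCommGroup A] (x : A) :
    x ∈ multiplesAddSubgroup m A ↔ ∃ b : A, m • b = x := by
  constructor
  · rintro ⟨b, rfl⟩; exact ⟨b, rfl⟩
  · rintro ⟨b, rfl⟩; exact ⟨b, rfl⟩

lemma sum_smul_invariant {G A : Type*} [Group G] [Fintype G] [AddCommGroup A]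
    [DistribMulAction G A] (a : A) (h : G) : h • (∑ g : G, g • a) = ∑ g : G, g • a := by
  rw [Finset.smul_sum]
  exact Fintype.sum_equiv (Equiv.mulLeft h) _ _ (fun g => smul_smul h g a)

/-- if `G` is a finite group acting on an abelian group `A` and `m` is a
positive integer coprime to `|G|`, then the natural map `A^G → (A/mA)^G` is surjective
onto the invariants of the reduction and has kernel `m·A^G`; hence it induces an
isomorphism `A^G / m·A^G ≅ (A/mA)^G`. -/
theorem stmt0 (G A : Type*) [Group G] [Finite G] [AddCommGroup A]
    [DistribMulAction G A] (m : ℕ) (hm : 0 < m) (hcop : Nat.Coprime m (Nat.card G)) :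
    let mA : AddSubgroup A := multiplesAddSubgroup m A
    let φ : invariantsAddSubgroup G A →+ A ⧸ mA :=
      (QuotientAddGroup.mk' mA).comp (invariantsAddSubgroup G A).subtype
    -- the kernel of the natural map is `m·A^G` …
    φ.ker = (multiplesAddSubgroup m (invariantsAddSubgroup G A)) ∧
    -- … and its range is exactly the set of `G`-invariant elements of `A/mA`
    (φ.range : Set (A ⧸ mA)) =
      {x : A ⧸ mA | ∀ g : G, ∀ a : A, QuotientAddGroup.mk a = x →
        QuotientAddGroup.mk (g • a) = x} := by
  intro mA φ
  have : Fintype G := Fintype.ofFinite G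
  have hcard : Nat.card G = Fintype.card G := Nat.card_eq_fintype_card
  obtain ⟨u, v, huv⟩ : ∃ u v : ℤ, (m : ℤ) * u + (Nat.card G : ℤ) * v = 1 := by
    refine ⟨Nat.gcdA m (Nat.card G), Nat.gcdB m (Nat.card G), ?_⟩
    have h := Nat.gcd_eq_gcd_ab m (Nat.card G)
    rw [hcop] at h
    push_cast at h ⊢
    linarith
  have hφ : ∀ y : invariantsAddSubgroup G A, φ y = QuotientAddGroup.mk (y : A) := fun y => rfl
  constructor
  · ext y
    obtain ⟨a, ha⟩ := y
    rw [AddMonoidHom.mem_ker, hφ, QuotientAddGroup.eq_zero_iff]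
    constructor
    · intro hmem
      obtain ⟨b, hb⟩ := (mem_multiples_iff m a).mp hmem
      set N : A := ∑ g : G, g • b with hN
      have hNinv : N ∈ invariantsAddSubgroup G A := fun g => sum_smul_invariant b g
      have hmN : m • N = (Nat.card G) • a := by
        rw [hN, Finset.smul_sum]
        have heq : ∀ g : G, m • (g • b) = a := by
          intro g
          rw [smul_comm, hb, ha g]
        simp only [heq, Finset.sum_const, Finset.card_univ, hcard]
      have key : (m : ℤ) • (u • a + v • N) = a := by
        rw [smul_add, smul_comm (m:ℤ) u a, smul_comm (m:ℤ) v N,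
          natCast_zsmul a m, natCast_zsmul N m, hmN]
        have : u • (m • a) + v • ((Nat.card G) • a)
            = ((m : ℤ) * u + (Nat.card G : ℤ) * v) • a := by
          rw [add_smul, mul_comm (m:ℤ) u, mul_comm ((Nat.card G : ℤ)) v, mul_smul, mul_smul,
            natCast_zsmul, natCast_zsmul]
        rw [this, huv, one_smul]
      refine (mem_multiples_iff m _).mpr ⟨⟨u • a + v • N, ?_⟩, ?_⟩
      · intro g
        rw [smul_add, smul_comm g u a, smul_comm g v N, ha g, hNinv g]
      · ext
        show m • (u • a + v • N) = a
        rw [← natCast_zsmul (u • a + v • N) m]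
        exact key
    · rintro h
      obtain ⟨⟨b, hbinv⟩, hb⟩ := (mem_multiples_iff m _).mp h
      have : m • b = a := congrArg Subtype.val hb
      exact (mem_multiples_iff m a).mpr ⟨b, this⟩
  · ext x
    simp only [SetLike.mem_coe, AddMonoidHom.mem_range, Set.mem_setOf_eq]
    constructor
    · rintro ⟨⟨a, hainv⟩, rfl⟩ g a' ha'
      rw [hφ] at ha' ⊢
      rw [QuotientAddGroup.eq] at ha' ⊢
      obtain ⟨c, hc⟩ := (mem_multiples_iff m _).mp ha'
      refine (mem_multiples_iff m _).mpr ⟨g • c, ?_⟩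
      calc m • (g • c) = g • (m • c) := (smul_comm g m c).symm
        _ = g • (-a' + a) := by rw [hc]
        _ = -(g • a') + a := by rw [smul_add, smul_neg, hainv g]
    · intro hx
      obtain ⟨a, rfl⟩ := QuotientAddGroup.mk_surjective x
      set N : A := ∑ g : G, g • a with hN
      have hNinv : N ∈ invariantsAddSubgroup G A := fun g => sum_smul_invariant a g
      have hmkN : (QuotientAddGroup.mk N : A ⧸ mA) = (Nat.card G) • (QuotientAddGroup.mk a) := by
        have h1 : (QuotientAddGroup.mk N : A ⧸ mA)
            = ∑ g : G, (QuotientAddGroup.mk (g • a) : A ⧸ mA) := by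
          rw [hN]
          exact map_sum (QuotientAddGroup.mk' mA) _ _
        rw [h1]
        have heach : ∀ g : G, (QuotientAddGroup.mk (g • a) : A ⧸ mA) = QuotientAddGroup.mk a :=
          fun g => hx g a rfl
        simp only [heach, Finset.sum_const, Finset.card_univ, hcard]
      have hmzero : m • (QuotientAddGroup.mk a : A ⧸ mA) = 0 := by
        have h2 : m • (QuotientAddGroup.mk a : A ⧸ mA) = QuotientAddGroup.mk (m • a) :=
          ((QuotientAddGroup.mk' mA).map_nsmul m a).symm
        rw [h2, QuotientAddGroup.eq_zero_iff]
        exact (mem_multiples_iff m _).mpr ⟨a, rfl⟩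
      refine ⟨⟨v • N, fun g => by rw [smul_comm, hNinv g]⟩, ?_⟩
      rw [hφ]
      have h3 : (QuotientAddGroup.mk (v • N) : A ⧸ mA) = v • QuotientAddGroup.mk N :=
        map_zsmul (QuotientAddGroup.mk' mA) v N
      show (QuotientAddGroup.mk (v • N) : A ⧸ mA) = QuotientAddGroup.mk a
      rw [h3, hmkN]
      calc v • (Nat.card G) • (QuotientAddGroup.mk a : A ⧸ mA)
          = ((m : ℤ) * u + (Nat.card G : ℤ) * v) • (QuotientAddGroup.mk a : A ⧸ mA) := by
            rw [add_smul, mul_comm (m:ℤ) u, mul_comm ((Nat.card G : ℤ)) v, mul_smul, mul_smul,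
              natCast_zsmul, natCast_zsmul, hmzero, smul_zero, zero_add]
        _ = QuotientAddGroup.mk a := by rw [huv, one_smul]
end

section
/- Let F be a free pro-p group topologically generated by two elements x, y. Then the abelianization [F,F]^{ab} of the commutator subgroup is, as a module over ℤ_p[[F/[F,F]]] under the conjugation action, a cyclic module generated by the class of [x,y]. -/
/-- A topological group is pro-`p` if it is profinite (compact, Hausdorff, totally
disconnected) and every open normal subgroup has `p`-power index. -/
def IsProP (p : ℕ) (G : Type*) [Group G] [TopologicalSpace G] : Prop :=
  CompactSpace G ∧ T2Space G ∧ TotallyDisconnectedSpace G ∧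
    ∀ U : Subgroup G, U.Normal → IsOpen (U : Set G) → ∃ n : ℕ, U.index = p ^ n

open scoped commutatorElement

/-- let `F` be a free pro-`p` group topologically generated by two elements
`x, y` (freeness expressed by the universal property: every pair of elements of a pro-`p`
group extends uniquely to a continuous homomorphism).  Then the abelianization
`[F,F]^{ab}` of the closed commutator subgroup `C = [F,F]` is, as a module over
`ℤ_p[[F/C]]` under the conjugation action, cyclic generated by the class of `⁅x,y⁆`:
equivalently, `C` is the smallest closed subgroup containing `[C,C]` and all
`F`-conjugates of `⁅x,y⁆`. -/
theorem stmt5 (p : ℕ) [Fact p.Prime] (F : Type) [Group F] [TopologicalSpace F]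
    [IsTopologicalGroup F] (hF : IsProP p F) (x y : F)
    (hgen : (Subgroup.closure {x, y}).topologicalClosure = ⊤)
    (hfree : ∀ (Q : Type) [Group Q] [TopologicalSpace Q] [IsTopologicalGroup Q],
      IsProP p Q → ∀ a b : Q,
        ∃! φ : F →* Q, Continuous φ ∧ φ x = a ∧ φ y = b) :
    let C : Subgroup F := (commutator F).topologicalClosure
    (Subgroup.closure
        ({z | ∃ g : F, z = g * ⁅x, y⁆ * g⁻¹} ∪
          {z | ∃ a ∈ C, ∃ b ∈ C, z = ⁅a, b⁆})).topologicalClosure = C := by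
  intro C
  haveI hCnormal : C.Normal := Subgroup.is_normal_topologicalClosure _
  set Sset : Set F :=
    ({z | ∃ g : F, z = g * ⁅x, y⁆ * g⁻¹} ∪
      {z | ∃ a ∈ C, ∃ b ∈ C, z = ⁅a, b⁆}) with hSset
  -- the generating set is conjugation-invariant
  have hconj : ∀ g : F, ∀ z ∈ Sset, g * z * g⁻¹ ∈ Sset := by
    intro g z hz
    rcases hz with ⟨h, rfl⟩ | ⟨a, ha, b, hb, rfl⟩
    · exact Or.inl ⟨g * h, by group⟩
    · refine Or.inr ⟨g * a * g⁻¹, hCnormal.conj_mem a ha g,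
        g * b * g⁻¹, hCnormal.conj_mem b hb g, by group⟩
  haveI hNsubnormal : (Subgroup.closure Sset).Normal := by
    constructor
    intro n hn g
    have hmap : (Subgroup.closure Sset).map (MulAut.conj g).toMonoidHom
        ≤ Subgroup.closure Sset := by
      rw [MonoidHom.map_closure]
      refine Subgroup.closure_le _ |>.2 ?_
      rintro z ⟨w, hw, rfl⟩
      exact Subgroup.subset_closure (hconj g w hw)
    exact hmap ⟨n, hn, rfl⟩
  set N : Subgroup F := (Subgroup.closure Sset).topologicalClosure with hN
  haveI hNnormal : N.Normal := Subgroup.is_normal_topologicalClosure _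
  have hNclosed : IsClosed (N : Set F) := Subgroup.isClosed_topologicalClosure _
  have hxyN : ⁅x, y⁆ ∈ N :=
    Subgroup.le_topologicalClosure _
      (Subgroup.subset_closure (Or.inl ⟨1, by group⟩))
  -- the quotient map
  let π : F →* F ⧸ N := QuotientGroup.mk' N
  have hker : ∀ a : F, π a = 1 ↔ a ∈ N := fun a => QuotientGroup.eq_one_iff a
  have hcomm : ∀ a b : F, ⁅a, b⁆ ∈ N ↔ π a * π b = π b * π a := by
    intro a b
    rw [← hker ⁅a, b⁆]
    have : π ⁅a, b⁆ = ⁅π a, π b⁆ := map_commutatorElement π a b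
    rw [this, commutatorElement_eq_one_iff_commute, commute_iff_eq]
  -- the set of `a` with `⁅a, b⁆ ∈ N` is closed
  have hclosed_set : ∀ b : F, IsClosed {a : F | ⁅a, b⁆ ∈ N} := by
    intro b
    have hc : Continuous fun a : F => a * b * a⁻¹ * b⁻¹ :=
      ((continuous_id.mul continuous_const).mul continuous_id.inv).mul continuous_const
    exact hNclosed.preimage hc
  -- a closed subgroup containing x and y is everything
  have htop : ∀ T : Subgroup F, IsClosed (T : Set F) → x ∈ T → y ∈ T → ∀ a : F, a ∈ T := by
    intro T hTc hx hy a
    have h1 : Subgroup.closure {x, y} ≤ T := by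
      refine Subgroup.closure_le _ |>.2 ?_
      rintro z (rfl | rfl) <;> assumption
    have h2 : (Subgroup.closure {x, y}).topologicalClosure ≤ T :=
      Subgroup.topologicalClosure_minimal _ h1 hTc
    rw [hgen] at h2
    exact h2 (Subgroup.mem_top a)
  -- Step 1: every element of F commutes with π x and π y modulo N
  have step1 : ∀ a : F, ⁅a, x⁆ ∈ N ∧ ⁅a, y⁆ ∈ N := by
    have hS : ∀ a : F, a ∈ Subgroup.comap π (Subgroup.centralizer {π x, π y}) ↔
        ⁅a, x⁆ ∈ N ∧ ⁅a, y⁆ ∈ N := by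
      intro a
      simp only [Subgroup.mem_comap, Subgroup.mem_centralizer_iff]
      constructor
      · intro h
        refine ⟨(hcomm a x).2 ?_, (hcomm a y).2 ?_⟩
        · exact (h (π x) (Or.inl rfl)).symm
        · exact (h (π y) (Or.inr rfl)).symm
      · rintro ⟨h1, h2⟩ g hg
        rcases hg with rfl | rfl
        · exact ((hcomm a x).1 h1).symm
        · exact ((hcomm a y).1 h2).symm
    have hclosed : IsClosed ((Subgroup.comap π (Subgroup.centralizer {π x, π y}) : Subgroup F) :
        Set F) := by
      have : ((Subgroup.comap π (Subgroup.centralizer {π x, π y}) : Subgroup F) : Set F)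
          = {a : F | ⁅a, x⁆ ∈ N} ∩ {a : F | ⁅a, y⁆ ∈ N} := by
        ext a
        simp only [SetLike.mem_coe, Set.mem_inter_iff, Set.mem_setOf_eq]
        exact hS a
      rw [this]
      exact (hclosed_set x).inter (hclosed_set y)
    have hx : x ∈ Subgroup.comap π (Subgroup.centralizer {π x, π y}) := by
      rw [hS]
      have h1 : ⁅x, x⁆ = 1 := by group
      exact ⟨by rw [h1]; exact one_mem N, hxyN⟩
    have hy : y ∈ Subgroup.comap π (Subgroup.centralizer {π x, π y}) := by
      rw [hS]
      have h1 : ⁅y, x⁆ = ⁅x, y⁆⁻¹ := by group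
      have h2 : ⁅y, y⁆ = 1 := by group
      exact ⟨by rw [h1]; exact inv_mem hxyN, by rw [h2]; exact one_mem N⟩
    intro a
    exact (hS a).1 (htop _ hclosed hx hy a)
  -- Step 2: every commutator lies in N
  have step2 : ∀ a b : F, ⁅a, b⁆ ∈ N := by
    have hT : ∀ b : F, b ∈ Subgroup.comap π (Subgroup.center (F ⧸ N)) ↔
        ∀ a : F, ⁅a, b⁆ ∈ N := by
      intro b
      simp only [Subgroup.mem_comap, Subgroup.mem_center_iff]
      constructor
      · intro h a
        exact (hcomm a b).2 (h (π a))
      · intro h g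
        obtain ⟨a, rfl⟩ := QuotientGroup.mk'_surjective N g
        exact (hcomm a b).1 (h a)
    have hclosed : IsClosed ((Subgroup.comap π (Subgroup.center (F ⧸ N)) : Subgroup F) :
        Set F) := by
      have : ((Subgroup.comap π (Subgroup.center (F ⧸ N)) : Subgroup F) : Set F)
          = ⋂ a : F, {b : F | ⁅a, b⁆ ∈ N} := by
        ext b
        simp only [SetLike.mem_coe, Set.mem_iInter, Set.mem_setOf_eq]
        exact hT b
      rw [this]
      refine isClosed_iInter fun a => ?_
      have hc : Continuous fun b : F => a * b * a⁻¹ * b⁻¹ :=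
        ((continuous_const.mul continuous_id).mul continuous_const).mul continuous_id.inv
      exact hNclosed.preimage hc
    have hx : x ∈ Subgroup.comap π (Subgroup.center (F ⧸ N)) :=
      (hT x).2 fun a => (step1 a).1
    have hy : y ∈ Subgroup.comap π (Subgroup.center (F ⧸ N)) :=
      (hT y).2 fun a => (step1 a).2
    intro a b
    exact (hT b).1 (htop _ hclosed hx hy b) a
  -- Conclusion
  apply le_antisymm
  · -- N ≤ C
    refine Subgroup.topologicalClosure_minimal _ ?_ (Subgroup.isClosed_topologicalClosure _)
    refine Subgroup.closure_le _ |>.2 ?_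
    have hxyC : ⁅x, y⁆ ∈ C := by
      refine Subgroup.le_topologicalClosure _ ?_
      rw [commutator_def]
      exact Subgroup.commutator_mem_commutator (Subgroup.mem_top x) (Subgroup.mem_top y)
    rintro z hz
    rcases hz with ⟨g, rfl⟩ | ⟨a, ha, b, hb, rfl⟩
    · exact SetLike.mem_coe.2 (hCnormal.conj_mem ⁅x, y⁆ hxyC g)
    · refine SetLike.mem_coe.2 ?_
      rw [commutatorElement_def]
      exact mul_mem (mul_mem (mul_mem ha hb) (inv_mem ha)) (inv_mem hb)
  · -- C ≤ N
    refine Subgroup.topologicalClosure_minimal _ ?_ hNclosed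
    rw [commutator_def, Subgroup.commutator_le]
    intro a _ b _
    exact step2 a b
end

section
/- Let 0 → A → B → C → 0 be a short exact sequence of profinite abelian groups with C finite, and suppose B is topologically finitely generated. Then the p-adic completions fit into an exact sequence 1 → A⊗̂ℤ_p → B⊗̂ℤ_p → C⊗̂ℤ_p → 1, where C⊗̂ℤ_p is the p-Sylow subgroup of C. -/
set_option maxHeartbeats 1000000

/-- The subgroup `p^n·M` of an abelian group `M`. -/
def pPow (p n : ℕ) (M : Type*) [AddCommGroup M] : AddSubgroup M :=
  ((p ^ n) • AddMonoidHom.id M).range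

theorem pPow_succ_le (p n : ℕ) (M : Type*) [AddCommGroup M] :
    pPow p (n + 1) M ≤ (pPow p n M).comap (AddMonoidHom.id M) := by
  rintro x ⟨a, rfl⟩
  exact ⟨p • a, by simp [pPow, pow_succ, mul_smul]⟩

theorem pPow_le_comap (p n : ℕ) {M N : Type*} [AddCommGroup M] [AddCommGroup N]
    (f : M →+ N) : pPow p n M ≤ (pPow p n N).comap f := by
  rintro x ⟨a, rfl⟩
  exact ⟨f a, by simp [pPow]⟩

/-- The `p`-adic completion `M ⊗̂ ℤ_p = lim_n M/p^n M` of an abelian group `M`,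
realized as the subgroup of compatible sequences in `∏ n, M/p^n M`. -/
def padicCompletionSubgroup (p : ℕ) (M : Type*) [AddCommGroup M] :
    AddSubgroup (∀ n : ℕ, M ⧸ pPow p n M) where
  carrier := {x | ∀ n : ℕ,
    QuotientAddGroup.map _ _ (AddMonoidHom.id M) (pPow_succ_le p n M) (x (n + 1)) = x n}
  zero_mem' := fun n => by simp
  add_mem' := fun {a b} ha hb n => by
    simp only [Pi.add_apply, map_add, ha n, hb n]
  neg_mem' := fun {a} ha n => by
    simp only [Pi.neg_apply, map_neg, ha n]

/-- The `p`-adic completion of `M`. -/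
def PadicCompletion (p : ℕ) (M : Type*) [AddCommGroup M] :=
  padicCompletionSubgroup p M

noncomputable instance (p : ℕ) (M : Type*) [AddCommGroup M] :
    AddCommGroup (PadicCompletion p M) :=
  inferInstanceAs (AddCommGroup (padicCompletionSubgroup p M))

theorem padicCompletion_comm_sq (p n : ℕ) {M N : Type*} [AddCommGroup M]
    [AddCommGroup N] (f : M →+ N) (y : M ⧸ pPow p (n + 1) M) :
    QuotientAddGroup.map _ _ (AddMonoidHom.id N) (pPow_succ_le p n N)
      (QuotientAddGroup.map _ _ f (pPow_le_comap p (n + 1) f) y) =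
    QuotientAddGroup.map _ _ f (pPow_le_comap p n f)
      (QuotientAddGroup.map _ _ (AddMonoidHom.id M) (pPow_succ_le p n M) y) := by
  obtain ⟨a, rfl⟩ := QuotientAddGroup.mk'_surjective _ y
  rfl

/-- Functoriality of the `p`-adic completion. -/
def PadicCompletion.map (p : ℕ) {M N : Type*} [AddCommGroup M] [AddCommGroup N]
    (f : M →+ N) : PadicCompletion p M →+ PadicCompletion p N where
  toFun x := ⟨fun n => QuotientAddGroup.map _ _ f (pPow_le_comap p n f) (x.1 n), by
    intro n
    dsimp only
    rw [padicCompletion_comm_sq p n f (x.1 (n + 1)), x.2 n]⟩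
  map_zero' := by
    apply Subtype.ext
    funext n
    show QuotientAddGroup.map _ _ f (pPow_le_comap p n f)
        ((0 : ∀ k : ℕ, M ⧸ pPow p k M) n) = (0 : ∀ k : ℕ, N ⧸ pPow p k N) n
    rw [Pi.zero_apply, map_zero, Pi.zero_apply]
  map_add' := fun x y => by
    apply Subtype.ext
    funext n
    show QuotientAddGroup.map _ _ f (pPow_le_comap p n f) ((x.1 + y.1) n) = _
    rw [Pi.add_apply, map_add]
    rfl

/-- The `p`-primary component (`p`-Sylow subgroup) of an abelian group. -/
def pPrimary (p : ℕ) (C : Type*) [AddCommGroup C] : AddSubgroup C where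
  carrier := {c | ∃ n : ℕ, p ^ n • c = 0}
  zero_mem' := ⟨0, smul_zero _⟩
  add_mem' := by
    rintro a b ⟨n, ha⟩ ⟨m, hb⟩
    refine ⟨n + m, ?_⟩
    have ha' : p ^ (n + m) • a = 0 := by rw [pow_add, mul_comm, mul_smul, ha, smul_zero]
    have hb' : p ^ (n + m) • b = 0 := by rw [pow_add, mul_smul, hb, smul_zero]
    rw [smul_add, ha', hb', add_zero]
  neg_mem' := by rintro a ⟨n, ha⟩; exact ⟨n, by rw [smul_neg, ha, neg_zero]⟩

section AuxHelpers

variable {p : ℕ} {M : Type*} [AddCommGroup M]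

theorem aux_mem_pPow_iff {n : ℕ} {a : M} : a ∈ pPow p n M ↔ ∃ z : M, (p ^ n) • z = a :=
  Iff.rfl

theorem aux_smul_mem_pPow (n : ℕ) (z : M) : (p ^ n) • z ∈ pPow p n M :=
  ⟨z, rfl⟩

theorem aux_pPow_anti {m n : ℕ} (h : m ≤ n) : pPow p n M ≤ pPow p m M := by
  intro x hx
  obtain ⟨z, rfl⟩ := aux_mem_pPow_iff.mp hx
  refine aux_mem_pPow_iff.mpr ⟨(p ^ (n - m)) • z, ?_⟩
  rw [smul_smul, ← pow_add, Nat.add_sub_cancel' h]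

theorem aux_mem_pPow_zero (a : M) : a ∈ pPow p 0 M :=
  aux_mem_pPow_iff.mpr ⟨a, by simp⟩

end AuxHelpers
section AuxTop

variable {p : ℕ} {M : Type*} [AddCommGroup M] [TopologicalSpace M]
  [IsTopologicalAddGroup M] [CompactSpace M] [T2Space M]

theorem aux_isClosed_pPow (n : ℕ) : IsClosed ((pPow p n M : AddSubgroup M) : Set M) := by
  have h : ((pPow p n M : AddSubgroup M) : Set M) = (fun x : M => (p ^ n) • x) '' Set.univ := by
    ext a
    simp only [Set.image_univ, Set.mem_range, SetLike.mem_coe]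
    exact aux_mem_pPow_iff
  rw [h]
  exact (isCompact_univ.image (continuous_nsmul _)).isClosed

end AuxTop

section AuxRep

variable {p : ℕ} {M : Type*} [AddCommGroup M]

theorem aux_rep_compat (x : PadicCompletion p M) (k : ℕ) :
    ∀ (n : ℕ) (a : M), (QuotientAddGroup.mk a : M ⧸ pPow p (n + k) M) = x.1 (n + k) →
      (QuotientAddGroup.mk a : M ⧸ pPow p n M) = x.1 n := by
  induction k with
  | zero => intro n a h; exact h
  | succ k ih =>
    intro n a h
    apply ih n
    have h2 := x.2 (n + k)
    have h' : (QuotientAddGroup.mk a : M ⧸ pPow p (n + k + 1) M) = x.1 (n + k + 1) := h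
    rw [← h2, ← h', QuotientAddGroup.map_mk]
    rfl

theorem aux_out_rep (x : PadicCompletion p M) (n : ℕ) :
    (QuotientAddGroup.mk ((x.1 n).out) : M ⧸ pPow p n M) = x.1 n :=
  Quotient.out_eq _

theorem aux_out_rep_le (x : PadicCompletion p M) {n N : ℕ} (h : n ≤ N) :
    (QuotientAddGroup.mk ((x.1 N).out) : M ⧸ pPow p n M) = x.1 n := by
  have := aux_rep_compat x (N - n) n ((x.1 N).out)
  rw [Nat.add_sub_cancel' h] at this
  exact this (aux_out_rep x N)

end AuxRep
section AuxFin

variable {p : ℕ} {C : Type*} [AddCommGroup C] [Finite C]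

theorem aux_stab (p : ℕ) (C : Type*) [AddCommGroup C] [Finite C] :
    ∃ n₀ : ℕ, (∀ n : ℕ, n₀ ≤ n → pPow p n C = pPow p n₀ C) ∧
      (∀ n : ℕ, pPow p n₀ C ≤ pPow p n C) ∧
      (∀ j : ℕ, ∀ s ∈ pPow p n₀ C, ∃ s' ∈ pPow p n₀ C, (p ^ j) • s' = s) := by
  have hfin : Finite (AddSubgroup C) :=
    Finite.of_injective (fun H : AddSubgroup C => (H : Set C)) SetLike.coe_injective
  -- find m with pPow p (m+1) C = pPow p m C
  have hkey : ∃ m : ℕ, pPow p (m + 1) C = pPow p m C := by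
    obtain ⟨a, b, hab, heq⟩ := Finite.exists_ne_map_eq_of_infinite (fun k : ℕ => pPow p k C)
    have key : ∀ a b : ℕ, a < b → pPow p a C = pPow p b C →
        pPow p (a + 1) C = pPow p a C := by
      intro a b hlt he
      refine le_antisymm (aux_pPow_anti (Nat.le_succ a)) ?_
      calc pPow p a C = pPow p b C := he
        _ ≤ pPow p (a + 1) C := aux_pPow_anti hlt
    rcases hab.lt_or_gt with h | h
    · exact ⟨a, key a b h heq⟩
    · exact ⟨b, key b a h heq.symm⟩
  obtain ⟨m, hm⟩ := hkey
  -- one-step divisibility inside S := pPow p m C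
  have hdiv1 : ∀ s ∈ pPow p m C, ∃ s' ∈ pPow p m C, p • s' = s := by
    intro s hs
    rw [← hm] at hs
    obtain ⟨z, rfl⟩ := aux_mem_pPow_iff.mp hs
    refine ⟨(p ^ m) • z, aux_smul_mem_pPow m z, ?_⟩
    rw [smul_smul, ← pow_succ']
  have hdivj : ∀ j : ℕ, ∀ s ∈ pPow p m C, ∃ s' ∈ pPow p m C, (p ^ j) • s' = s := by
    intro j
    induction j with
    | zero => intro s hs; exact ⟨s, hs, by simp⟩
    | succ j ih =>
      intro s hs
      obtain ⟨s1, hs1, hps1⟩ := hdiv1 s hs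
      obtain ⟨s', hs', hps'⟩ := ih s1 hs1
      refine ⟨s', hs', ?_⟩
      rw [pow_succ', mul_smul, hps', hps1]
  have hle : ∀ n : ℕ, pPow p m C ≤ pPow p n C := by
    intro n
    induction n with
    | zero => intro s _; exact aux_mem_pPow_zero s
    | succ n ih =>
      intro s hs
      obtain ⟨s1, hs1, hps1⟩ := hdiv1 s hs
      obtain ⟨z, hz⟩ := aux_mem_pPow_iff.mp (ih hs1)
      refine aux_mem_pPow_iff.mpr ⟨z, ?_⟩
      rw [pow_succ', mul_smul, hz, hps1]
  exact ⟨m, fun n hn => le_antisymm (aux_pPow_anti hn) (hle n), hle, hdivj⟩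

theorem aux_fin_tors (c : C) (k : ℕ) (h1 : (p ^ k) • c = 0)
    (h2 : ∀ n : ℕ, c ∈ pPow p n C) : c = 0 := by
  obtain ⟨m, _, _, hdivj⟩ := aux_stab p C
  set S := pPow p m C with hS
  have hmem : ∀ s : S, (p ^ k) • (s : C) ∈ S := fun s => nsmul_mem s.2 _
  let φ : S → S := fun s => ⟨(p ^ k) • (s : C), hmem s⟩
  have hsurj : Function.Surjective φ := by
    intro s
    obtain ⟨s', hs', hps'⟩ := hdivj k (s : C) s.2
    exact ⟨⟨s', hs'⟩, Subtype.ext hps'⟩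
  have hinj : Function.Injective φ := (Finite.injective_iff_surjective).mpr hsurj
  have : φ ⟨c, h2 m⟩ = φ ⟨0, zero_mem S⟩ := by
    apply Subtype.ext
    simp only [φ, h1, smul_zero]
  have := hinj this
  exact congrArg Subtype.val this

end AuxFin
section AuxDiv

variable {p : ℕ} {A B C : Type*} [AddCommGroup A] [AddCommGroup B] [AddCommGroup C]

theorem aux_div [TopologicalSpace B] [IsTopologicalAddGroup B] [CompactSpace B] [T2Space B]
    [Finite C] (f : A →+ B) (g : B →+ C)
    (hfi : Function.Injective f) (hex : Function.Exact f g) :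
    ∀ (n : ℕ) (a : A), (∀ N : ℕ, f a ∈ pPow p N B) → a ∈ pPow p n A := by
  have step : ∀ a : A, (∀ N : ℕ, f a ∈ pPow p N B) →
      ∃ a' : A, (∀ N : ℕ, f a' ∈ pPow p N B) ∧ p • a' = a := by
    intro a ha
    have hWne : ∀ N : ℕ, ({b : B | p • b = f a} ∩
        ((pPow p N B : AddSubgroup B) : Set B)).Nonempty := by
      intro N
      obtain ⟨z, hz⟩ := aux_mem_pPow_iff.mp (ha (N + 1))
      refine ⟨(p ^ N) • z, ?_, aux_smul_mem_pPow N z⟩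
      show p • (p ^ N) • z = f a
      rw [smul_smul, ← pow_succ', hz]
    have hWcl : ∀ N : ℕ, IsClosed ({b : B | p • b = f a} ∩
        ((pPow p N B : AddSubgroup B) : Set B)) := by
      intro N
      refine IsClosed.inter ?_ (aux_isClosed_pPow N)
      exact isClosed_singleton.preimage (continuous_nsmul p)
    have hdir : Directed (· ⊇ ·) (fun N : ℕ => {b : B | p • b = f a} ∩
        ((pPow p N B : AddSubgroup B) : Set B)) := by
      intro i j
      refine ⟨max i j, ?_, ?_⟩
      · intro b hb; exact ⟨hb.1, aux_pPow_anti (le_max_left i j) hb.2⟩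
      · intro b hb; exact ⟨hb.1, aux_pPow_anti (le_max_right i j) hb.2⟩
    obtain ⟨d, hd⟩ := IsCompact.nonempty_iInter_of_directed_nonempty_isCompact_isClosed
      _ hdir hWne (fun N => (hWcl N).isCompact) hWcl
    rw [Set.mem_iInter] at hd
    have hpd : p • d = f a := (hd 0).1
    have hdN : ∀ N : ℕ, d ∈ pPow p N B := fun N => (hd N).2
    have hgd : g d = 0 := by
      apply aux_fin_tors (p := p) (g d) 1
      · rw [pow_one, ← map_nsmul, hpd, hex.apply_apply_eq_zero]
      · intro n
        obtain ⟨z, hz⟩ := aux_mem_pPow_iff.mp (hdN n)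
        exact aux_mem_pPow_iff.mpr ⟨g z, by rw [← map_nsmul, hz]⟩
    obtain ⟨a', ha'⟩ := (hex d).mp hgd
    refine ⟨a', fun N => by rw [ha']; exact hdN N, hfi ?_⟩
    rw [map_nsmul, ha', hpd]
  intro n
  induction n with
  | zero => intro a _; exact aux_mem_pPow_zero a
  | succ n ih =>
    intro a ha
    obtain ⟨a', ha', hpa'⟩ := step a ha
    obtain ⟨z, hz⟩ := aux_mem_pPow_iff.mp (ih a' ha')
    refine aux_mem_pPow_iff.mpr ⟨z, ?_⟩
    rw [pow_succ', mul_smul, hz, hpa']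

end AuxDiv
section AuxInj

variable {p : ℕ} {A B C : Type*} [AddCommGroup A] [AddCommGroup B] [AddCommGroup C]

theorem aux_inj [TopologicalSpace A] [IsTopologicalAddGroup A] [CompactSpace A] [T2Space A]
    [TopologicalSpace B] [IsTopologicalAddGroup B] [CompactSpace B] [T2Space B]
    [Finite C] (f : A →+ B) (g : B →+ C) (hfc : Continuous f)
    (hfi : Function.Injective f) (hex : Function.Exact f g) :
    Function.Injective (PadicCompletion.map p f) := by
  rw [injective_iff_map_eq_zero]
  intro x hx
  have hxc : ∀ N : ℕ, f ((x.1 N).out) ∈ pPow p N B := by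
    intro N
    have h1 : (PadicCompletion.map p f x).1 N = 0 := by rw [hx]; rfl
    have h2 : QuotientAddGroup.map _ _ f (pPow_le_comap p N f)
        (QuotientAddGroup.mk ((x.1 N).out)) = QuotientAddGroup.mk (f ((x.1 N).out)) :=
      QuotientAddGroup.map_mk _ _ _ _ _
    rw [aux_out_rep x N] at h2
    have h3 : (PadicCompletion.map p f x).1 N =
        QuotientAddGroup.map _ _ f (pPow_le_comap p N f) (x.1 N) := rfl
    rw [h3, h2] at h1
    exact (QuotientAddGroup.eq_zero_iff _).mp h1
  apply Subtype.ext
  funext n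
  show x.1 n = 0
  have hZne : ∀ N : ℕ, ((f ⁻¹' ((pPow p N B : AddSubgroup B) : Set B)) ∩
      {a : A | a - (x.1 n).out ∈ pPow p n A}).Nonempty := by
    intro N
    refine ⟨(x.1 (max n N)).out, ?_, ?_⟩
    · exact aux_pPow_anti (le_max_right n N) (hxc (max n N))
    · show _ - (x.1 n).out ∈ pPow p n A
      have e1 := aux_out_rep_le x (le_max_left n N)
      have e2 := aux_out_rep x n
      exact (QuotientAddGroup.eq_iff_sub_mem).mp (e1.trans e2.symm)
  have hZcl : ∀ N : ℕ, IsClosed ((f ⁻¹' ((pPow p N B : AddSubgroup B) : Set B)) ∩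
      {a : A | a - (x.1 n).out ∈ pPow p n A}) := by
    intro N
    refine IsClosed.inter ((aux_isClosed_pPow N).preimage hfc) ?_
    exact (aux_isClosed_pPow n).preimage (continuous_id.sub continuous_const)
  have hdir : Directed (· ⊇ ·) (fun N : ℕ => (f ⁻¹' ((pPow p N B : AddSubgroup B) : Set B)) ∩
      {a : A | a - (x.1 n).out ∈ pPow p n A}) := by
    intro i j
    refine ⟨max i j, ?_, ?_⟩
    · intro b hb; exact ⟨aux_pPow_anti (le_max_left i j) hb.1, hb.2⟩
    · intro b hb; exact ⟨aux_pPow_anti (le_max_right i j) hb.1, hb.2⟩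
  obtain ⟨β, hβ⟩ := IsCompact.nonempty_iInter_of_directed_nonempty_isCompact_isClosed
    _ hdir hZne (fun N => (hZcl N).isCompact) hZcl
  rw [Set.mem_iInter] at hβ
  have hβ1 : ∀ N : ℕ, f β ∈ pPow p N B := fun N => (hβ N).1
  have hβ2 : β - (x.1 n).out ∈ pPow p n A := (hβ 0).2
  have hβp : β ∈ pPow p n A := aux_div f g hfi hex n β hβ1
  have hout : (x.1 n).out ∈ pPow p n A := by
    have := sub_mem hβp hβ2
    rwa [sub_sub_cancel] at this
  rw [← aux_out_rep x n]
  exact (QuotientAddGroup.eq_zero_iff _).mpr hout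

end AuxInj
section AuxSurj

variable {p : ℕ} {B C : Type*} [AddCommGroup B] [AddCommGroup C]

theorem aux_quot_zero_eq (M : Type*) [AddCommGroup M] (u v : M ⧸ pPow p 0 M) : u = v := by
  obtain ⟨a, rfl⟩ := QuotientAddGroup.mk'_surjective _ u
  obtain ⟨b, rfl⟩ := QuotientAddGroup.mk'_surjective _ v
  exact (QuotientAddGroup.eq_iff_sub_mem).mpr (aux_mem_pPow_zero _)

theorem aux_surj (g : B →+ C) (hgs : Function.Surjective g) :
    Function.Surjective (PadicCompletion.map p g) := by
  intro c
  have key : ∀ (n : ℕ) (b : B), (QuotientAddGroup.mk (g b) : C ⧸ pPow p n C) = c.1 n →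
      ∃ b' : B, (QuotientAddGroup.mk (g b') : C ⧸ pPow p (n + 1) C) = c.1 (n + 1) ∧
        b' - b ∈ pPow p n B := by
    intro n b hb
    have hγ : (QuotientAddGroup.mk ((c.1 (n + 1)).out) : C ⧸ pPow p (n + 1) C) = c.1 (n + 1) :=
      aux_out_rep c (n + 1)
    have hγn : (QuotientAddGroup.mk ((c.1 (n + 1)).out) : C ⧸ pPow p n C) = c.1 n :=
      aux_rep_compat c 1 n _ hγ
    have hdiff : (c.1 (n + 1)).out - g b ∈ pPow p n C :=
      (QuotientAddGroup.eq_iff_sub_mem).mp (hγn.trans hb.symm)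
    obtain ⟨z, hz⟩ := aux_mem_pPow_iff.mp hdiff
    obtain ⟨b'', hb''⟩ := hgs z
    refine ⟨b + (p ^ n) • b'', ?_, ?_⟩
    · have hgb : g (b + (p ^ n) • b'') = (c.1 (n + 1)).out := by
        rw [map_add, map_nsmul, hb'', hz]
        abel
      rw [hgb, hγ]
    · have : b + (p ^ n) • b'' - b = (p ^ n) • b'' := by abel
      rw [this]
      exact aux_smul_mem_pPow n b''
  have base : (QuotientAddGroup.mk (g 0) : C ⧸ pPow p 0 C) = c.1 0 :=
    aux_quot_zero_eq C _ _
  let seq : ∀ n : ℕ, {b : B // (QuotientAddGroup.mk (g b) : C ⧸ pPow p n C) = c.1 n} :=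
    fun n => Nat.rec ⟨0, base⟩
      (fun n ih => ⟨(key n ih.1 ih.2).choose, (key n ih.1 ih.2).choose_spec.1⟩) n
  have hseq : ∀ n : ℕ, (seq (n + 1)).1 - (seq n).1 ∈ pPow p n B :=
    fun n => (key n (seq n).1 (seq n).2).choose_spec.2
  have hmem : (fun n => (QuotientAddGroup.mk ((seq n).1) : B ⧸ pPow p n B)) ∈
      padicCompletionSubgroup p B := by
    intro n
    show QuotientAddGroup.map _ _ (AddMonoidHom.id B) (pPow_succ_le p n B)
        (QuotientAddGroup.mk ((seq (n + 1)).1)) = QuotientAddGroup.mk ((seq n).1)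
    rw [QuotientAddGroup.map_mk]
    exact (QuotientAddGroup.eq_iff_sub_mem).mpr (hseq n)
  refine ⟨⟨_, hmem⟩, ?_⟩
  apply Subtype.ext
  funext n
  show QuotientAddGroup.map _ _ g (pPow_le_comap p n g)
      (QuotientAddGroup.mk ((seq n).1)) = c.1 n
  rw [QuotientAddGroup.map_mk]
  exact (seq n).2

end AuxSurj
section AuxExact

variable {p : ℕ} {A B C : Type*} [AddCommGroup A] [AddCommGroup B] [AddCommGroup C]

theorem aux_exact [TopologicalSpace A] [IsTopologicalAddGroup A] [CompactSpace A] [T2Space A]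
    [TopologicalSpace B] [IsTopologicalAddGroup B] [CompactSpace B] [T2Space B]
    (f : A →+ B) (g : B →+ C) (hfc : Continuous f)
    (hgs : Function.Surjective g) (hex : Function.Exact f g) :
    Function.Exact (PadicCompletion.map p f) (PadicCompletion.map p g) := by
  intro x
  constructor
  · -- hard direction
    intro hx
    have hxc : ∀ N : ℕ, g ((x.1 N).out) ∈ pPow p N C := by
      intro N
      have h1 : (PadicCompletion.map p g x).1 N = 0 := by rw [hx]; rfl
      have h2 : QuotientAddGroup.map _ _ g (pPow_le_comap p N g)
          (QuotientAddGroup.mk ((x.1 N).out)) = QuotientAddGroup.mk (g ((x.1 N).out)) :=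
        QuotientAddGroup.map_mk _ _ _ _ _
      rw [aux_out_rep x N] at h2
      have h3 : (PadicCompletion.map p g x).1 N =
          QuotientAddGroup.map _ _ g (pPow_le_comap p N g) (x.1 N) := rfl
      rw [h3, h2] at h1
      exact (QuotientAddGroup.eq_zero_iff _).mp h1
    have hZne : ∀ n : ℕ, ({a : A | f a - (x.1 n).out ∈ pPow p n B}).Nonempty := by
      intro n
      obtain ⟨z, hz⟩ := aux_mem_pPow_iff.mp (hxc n)
      obtain ⟨b', hb'⟩ := hgs z
      have hker : g ((x.1 n).out - (p ^ n) • b') = 0 := by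
        rw [map_sub, map_nsmul, hb', hz, sub_self]
      obtain ⟨a, ha⟩ := (hex _).mp hker
      refine ⟨a, ?_⟩
      show f a - (x.1 n).out ∈ pPow p n B
      rw [ha]
      have : (x.1 n).out - (p ^ n) • b' - (x.1 n).out = -((p ^ n) • b') := by abel
      rw [this]
      exact neg_mem (aux_smul_mem_pPow n b')
    have hZcl : ∀ n : ℕ, IsClosed {a : A | f a - (x.1 n).out ∈ pPow p n B} := by
      intro n
      exact (aux_isClosed_pPow n).preimage (hfc.sub continuous_const)
    have hsub : ∀ i j : ℕ, i ≤ j → {a : A | f a - (x.1 j).out ∈ pPow p j B} ⊆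
        {a : A | f a - (x.1 i).out ∈ pPow p i B} := by
      intro i j hij a ha
      have h1 : f a - (x.1 j).out ∈ pPow p i B := aux_pPow_anti hij ha
      have h2 : (x.1 j).out - (x.1 i).out ∈ pPow p i B := by
        have e1 := aux_out_rep_le x hij
        have e2 := aux_out_rep x i
        exact (QuotientAddGroup.eq_iff_sub_mem).mp (e1.trans e2.symm)
      have : f a - (x.1 i).out = (f a - (x.1 j).out) + ((x.1 j).out - (x.1 i).out) := by abel
      show f a - (x.1 i).out ∈ pPow p i B
      rw [this]
      exact add_mem h1 h2
    have hdir : Directed (· ⊇ ·) (fun n : ℕ => {a : A | f a - (x.1 n).out ∈ pPow p n B}) :=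
      fun i j => ⟨max i j, hsub i (max i j) (le_max_left i j),
        hsub j (max i j) (le_max_right i j)⟩
    obtain ⟨a, ha⟩ := IsCompact.nonempty_iInter_of_directed_nonempty_isCompact_isClosed
      _ hdir hZne (fun n => (hZcl n).isCompact) hZcl
    rw [Set.mem_iInter] at ha
    have hmem : (fun n => (QuotientAddGroup.mk a : A ⧸ pPow p n A)) ∈
        padicCompletionSubgroup p A := by
      intro n
      show QuotientAddGroup.map _ _ (AddMonoidHom.id A) (pPow_succ_le p n A)
          (QuotientAddGroup.mk a) = QuotientAddGroup.mk a
      rw [QuotientAddGroup.map_mk]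
      rfl
    refine ⟨⟨_, hmem⟩, ?_⟩
    apply Subtype.ext
    funext n
    show QuotientAddGroup.map _ _ f (pPow_le_comap p n f)
        (QuotientAddGroup.mk a) = x.1 n
    rw [QuotientAddGroup.map_mk, ← aux_out_rep x n]
    exact (QuotientAddGroup.eq_iff_sub_mem).mpr (ha n)
  · rintro ⟨y, rfl⟩
    apply Subtype.ext
    funext n
    show QuotientAddGroup.map _ _ g (pPow_le_comap p n g)
        (QuotientAddGroup.map _ _ f (pPow_le_comap p n f) (y.1 n)) = 0
    rw [← aux_out_rep y n, QuotientAddGroup.map_mk, QuotientAddGroup.map_mk]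
    refine (QuotientAddGroup.eq_zero_iff _).mpr ?_
    rw [hex.apply_apply_eq_zero]
    exact zero_mem _

end AuxExact
section AuxEquiv

theorem aux_equiv (p : ℕ) (C : Type*) [AddCommGroup C] [Finite C] :
    Nonempty (PadicCompletion p C ≃+ pPrimary p C) := by
  have hmem : ∀ c : pPrimary p C,
      (fun n => (QuotientAddGroup.mk (c : C) : C ⧸ pPow p n C)) ∈
        padicCompletionSubgroup p C := by
    intro c n
    show QuotientAddGroup.map _ _ (AddMonoidHom.id C) (pPow_succ_le p n C)
        (QuotientAddGroup.mk (c : C)) = QuotientAddGroup.mk (c : C)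
    rw [QuotientAddGroup.map_mk]
    rfl
  let θ : pPrimary p C →+ PadicCompletion p C :=
    { toFun := fun c => ⟨_, hmem c⟩
      map_zero' := by
        apply Subtype.ext
        funext n
        show (QuotientAddGroup.mk ((0 : pPrimary p C) : C) : C ⧸ pPow p n C) = 0
        simp
      map_add' := by
        intro u v
        apply Subtype.ext
        funext n
        show (QuotientAddGroup.mk ((u + v : pPrimary p C) : C) : C ⧸ pPow p n C) =
          QuotientAddGroup.mk (u : C) + QuotientAddGroup.mk (v : C)
        simp }
  have hinj : Function.Injective θ := by
    rw [injective_iff_map_eq_zero]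
    intro c hc
    have hcomp : ∀ n : ℕ, (c : C) ∈ pPow p n C := by
      intro n
      have h1 : (QuotientAddGroup.mk (c : C) : C ⧸ pPow p n C) = 0 :=
        congrFun (congrArg Subtype.val hc) n
      exact (QuotientAddGroup.eq_zero_iff _).mp h1
    obtain ⟨k, hk⟩ := c.2
    exact Subtype.ext (aux_fin_tors (c : C) k hk hcomp)
  have hsurj : Function.Surjective θ := by
    intro x
    obtain ⟨m, hstabm, hle, hdivj⟩ := aux_stab p C
    obtain ⟨s, hs, hps⟩ := hdivj m ((p ^ m) • (x.1 m).out) (aux_smul_mem_pPow m _)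
    have hc : (x.1 m).out - s ∈ pPrimary p C := ⟨m, by rw [smul_sub, hps, sub_self]⟩
    refine ⟨⟨(x.1 m).out - s, hc⟩, ?_⟩
    apply Subtype.ext
    funext n
    show (QuotientAddGroup.mk ((x.1 m).out - s) : C ⧸ pPow p n C) = x.1 n
    rcases le_total n m with h | h
    · have e1 : (QuotientAddGroup.mk ((x.1 m).out) : C ⧸ pPow p n C) = x.1 n :=
        aux_out_rep_le x h
      have e2 : ((x.1 m).out - s) - (x.1 m).out ∈ pPow p n C := by
        have : ((x.1 m).out - s) - (x.1 m).out = -s := by abel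
        rw [this]
        exact neg_mem (hle n hs)
      exact ((QuotientAddGroup.eq_iff_sub_mem).mpr e2).trans e1
    · have e1 : (QuotientAddGroup.mk ((x.1 n).out) : C ⧸ pPow p m C) = x.1 m :=
        aux_out_rep_le x h
      have e2 : (x.1 m).out - (x.1 n).out ∈ pPow p m C :=
        (QuotientAddGroup.eq_iff_sub_mem).mp ((aux_out_rep x m).trans e1.symm)
      have e3 : ((x.1 m).out - s) - (x.1 n).out ∈ pPow p n C := by
        have e4 : ((x.1 m).out - s) - (x.1 n).out = ((x.1 m).out - (x.1 n).out) - s := by abel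
        rw [e4]
        exact (hstabm n h).ge (sub_mem e2 hs)
      exact ((QuotientAddGroup.eq_iff_sub_mem).mpr e3).trans (aux_out_rep x n)
  exact ⟨(AddEquiv.ofBijective θ ⟨hinj, hsurj⟩).symm⟩

end AuxEquiv
/-- let `0 → A → B → C → 0` be a short exact sequence of profinite abelian
groups with `C` finite and `B` topologically finitely generated.  Then the `p`-adic
completions form an exact sequence `1 → A⊗̂ℤ_p → B⊗̂ℤ_p → C⊗̂ℤ_p → 1`, and `C⊗̂ℤ_p`
is the `p`-Sylow subgroup of `C`. -/
theorem stmt9 (p : ℕ) [Fact p.Prime]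
    (A B C : Type) [AddCommGroup A] [AddCommGroup B] [AddCommGroup C]
    [TopologicalSpace A] [IsTopologicalAddGroup A] [CompactSpace A] [T2Space A]
    [TotallyDisconnectedSpace A]
    [TopologicalSpace B] [IsTopologicalAddGroup B] [CompactSpace B] [T2Space B]
    [TotallyDisconnectedSpace B]
    [Finite C]
    (f : A →+ B) (g : B →+ C) (hfc : Continuous f)
    (hfi : Function.Injective f) (hgs : Function.Surjective g)
    (hex : Function.Exact f g)
    (hBfg : ∃ S : Finset B, (AddSubgroup.closure (S : Set B)).topologicalClosure = ⊤) :
    Function.Injective (PadicCompletion.map p f) ∧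
    Function.Surjective (PadicCompletion.map p g) ∧
    Function.Exact (PadicCompletion.map p f) (PadicCompletion.map p g) ∧
    Nonempty (PadicCompletion p C ≃+ pPrimary p C) := by
  exact ⟨aux_inj f g hfc hfi hex, aux_surj g hgs, aux_exact f g hfc hgs hex, aux_equiv p C⟩
end

section
/- Let G be a profinite group, H a closed normal subgroup with G/H ≅ Γ, and let Z ⊆ G be a closed subgroup with T ⊆ Z a closed normal subgroup such that Z/T is topologically generated by a single element s. Then the closed commutator subgroup [Z,Z] is topologically generated by [T,T] together with all iterated commutators [t, s, …, s] = [[…[[t,s],s]…],s] for t ∈ T and any number h ≥ 0 of copies of s. -/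
open scoped commutatorElement

/-- The left-normed iterated commutator `[t, s, …, s]` (`h` extra copies of `s`):
`iterComm s t 0 = t` and `iterComm s t (h+1) = ⁅iterComm s t h, s⁆`. -/
def iterComm {Z : Type*} [Group Z] (s t : Z) : ℕ → Z
  | 0 => t
  | h + 1 => ⁅iterComm s t h, s⁆

private lemma conj_commEl {Z : Type*} [Group Z] (g a b : Z) :
    g * ⁅a, b⁆ * g⁻¹ = ⁅g * a * g⁻¹, g * b * g⁻¹⁆ := by
  simp only [commutatorElement_def]; group

private lemma conj_iterComm {Z : Type*} [Group Z] (s g t : Z) (hg : g * s = s * g) :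
    ∀ h, g * iterComm s t h * g⁻¹ = iterComm s (g * t * g⁻¹) h := by
  intro h
  induction h with
  | zero => rfl
  | succ n ih =>
      have hgs : g * s * g⁻¹ = s := by
        rw [hg]; group
      show g * ⁅iterComm s t n, s⁆ * g⁻¹ = ⁅iterComm s (g * t * g⁻¹) n, s⁆
      rw [conj_commEl, hgs, ih]

open Pointwise in
/-- let `Z` be a profinite group, `T ⊴ Z` a closed normal subgroup, and
`s ∈ Z` an element whose image topologically generates the procyclic quotient `Z/T`.
Then the closed commutator subgroup `[Z,Z]` is topologically generated by `[T,T]`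
together with all iterated commutators `[t, s, …, s]` (`t ∈ T`). -/
theorem stmt11 (Z : Type*) [Group Z] [TopologicalSpace Z] [IsTopologicalGroup Z]
    [CompactSpace Z] [T2Space Z] [TotallyDisconnectedSpace Z]
    (T : Subgroup Z) [T.Normal] (hT : IsClosed (T : Set Z))
    (s : Z)
    (hs : (Subgroup.closure {((s : Z ⧸ T) : Z ⧸ T)}).topologicalClosure = ⊤) :
    (commutator Z).topologicalClosure =
      (Subgroup.closure
        ({z | ∃ a ∈ T, ∃ b ∈ T, z = ⁅a, b⁆} ∪
          {z | ∃ t ∈ T, ∃ h : ℕ, z = iterComm s t (h + 1)})).topologicalClosure := by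
  set S : Set Z := {z | ∃ a ∈ T, ∃ b ∈ T, z = ⁅a, b⁆} ∪
          {z | ∃ t ∈ T, ∃ h : ℕ, z = iterComm s t (h + 1)} with hSdef
  set L : Subgroup Z := Subgroup.closure S with hLdef
  set K : Subgroup Z := L.topologicalClosure with hKdef
  have hKc : IsClosed (K : Set Z) := L.isClosed_topologicalClosure
  have hLK : L ≤ K := L.le_topologicalClosure
  -- generators lie in K
  have hTK : ∀ a ∈ T, ∀ b ∈ T, ⁅a, b⁆ ∈ K := fun a ha b hb =>
    hLK (Subgroup.subset_closure (Or.inl ⟨a, ha, b, hb, rfl⟩))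
  have hIK : ∀ t ∈ T, ∀ h : ℕ, iterComm s t (h + 1) ∈ K := fun t ht h =>
    hLK (Subgroup.subset_closure (Or.inr ⟨t, ht, h, rfl⟩))
  have hTs : ∀ t ∈ T, ⁅t, s⁆ ∈ K := fun t ht => hIK t ht 0
  -- conjugation by s and s⁻¹ preserves S, hence L, hence K
  have hconjS : ∀ g : Z, g * s = s * g → (∀ x ∈ S, g * x * g⁻¹ ∈ S) := by
    rintro g hg x (⟨a, ha, b, hb, rfl⟩ | ⟨t, ht, h, rfl⟩)
    · exact Or.inl ⟨g * a * g⁻¹, Subgroup.Normal.conj_mem ‹T.Normal› a ha g, g * b * g⁻¹,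
        Subgroup.Normal.conj_mem ‹T.Normal› b hb g, (conj_commEl g a b)⟩
    · exact Or.inr ⟨g * t * g⁻¹, Subgroup.Normal.conj_mem ‹T.Normal› t ht g, h, (conj_iterComm s g t hg (h + 1))⟩
  have hconjL : ∀ g : Z, (∀ x ∈ S, g * x * g⁻¹ ∈ K) → ∀ x ∈ L, g * x * g⁻¹ ∈ K := by
    intro g hgS x hx
    induction hx using Subgroup.closure_induction with
    | mem y hy => exact hgS y hy
    | one => simpa using K.one_mem
    | mul y z _ _ hy hz =>
        have : g * (y * z) * g⁻¹ = (g * y * g⁻¹) * (g * z * g⁻¹) := by group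
        rw [this]; exact K.mul_mem hy hz
    | inv y _ hy =>
        have : g * y⁻¹ * g⁻¹ = (g * y * g⁻¹)⁻¹ := by group
        rw [this]; exact K.inv_mem hy
  have hconjK : ∀ g : Z, (∀ x ∈ L, g * x * g⁻¹ ∈ K) → ∀ x ∈ K, g * x * g⁻¹ ∈ K := by
    intro g hgL x hx
    have hc : Continuous fun y : Z => g * y * g⁻¹ := (continuous_const.mul continuous_id).mul continuous_const
    have := map_mem_closure hc hx (fun y hy => hgL y hy)
    rwa [hKc.closure_eq] at this
  have hKs : ∀ x ∈ K, s * x * s⁻¹ ∈ K :=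
    hconjK s (hconjL s (fun x hx => hLK (Subgroup.subset_closure (hconjS s rfl x hx))))
  have hKsinv : ∀ x ∈ K, s⁻¹ * x * s⁻¹⁻¹ ∈ K :=
    hconjK s⁻¹ (hconjL s⁻¹ (fun x hx => hLK (Subgroup.subset_closure
      (hconjS s⁻¹ (by group) x hx))))
  -- conjugation by powers of s preserves K
  have hKpow : ∀ n : ℤ, ∀ x ∈ K, s ^ n * x * (s ^ n)⁻¹ ∈ K := by
    intro n
    induction n using Int.induction_on with
    | zero => intro x hx; simpa using hx
    | succ n ih =>
        intro x hx
        have h1 : s ^ ((n : ℤ) + 1) * x * (s ^ ((n : ℤ) + 1))⁻¹ =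
            s ^ (n : ℤ) * (s * x * s⁻¹) * (s ^ (n : ℤ))⁻¹ := by
          rw [zpow_add_one]; group
        rw [h1]; exact ih _ (hKs x hx)
    | pred n ih =>
        intro x hx
        have h1 : s ^ (-(n : ℤ) - 1) * x * (s ^ (-(n : ℤ) - 1))⁻¹ =
            s ^ (-(n : ℤ)) * (s⁻¹ * x * s⁻¹⁻¹) * (s ^ (-(n : ℤ)))⁻¹ := by
          rw [zpow_sub_one]; group
        rw [h1]; exact ih _ (hKsinv x hx)
  -- the procyclic part C
  set C : Subgroup Z := (Subgroup.zpowers s).topologicalClosure with hCdef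
  have hCc : IsClosed (C : Set Z) := (Subgroup.zpowers s).isClosed_topologicalClosure
  have hsC : s ∈ C := (Subgroup.zpowers s).le_topologicalClosure (Subgroup.mem_zpowers s)
  -- conjugation by C preserves K
  have hKC : ∀ c ∈ C, ∀ x ∈ K, c * x * c⁻¹ ∈ K := by
    intro c hc x hx
    have hcont : Continuous fun y : Z => y * x * y⁻¹ := (continuous_id.mul continuous_const).mul continuous_inv
    have hmaps : Set.MapsTo (fun y : Z => y * x * y⁻¹)
        ((Subgroup.zpowers s : Subgroup Z) : Set Z) (K : Set Z) := by
      rintro y ⟨n, rfl⟩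
      exact hKpow n x hx
    have := map_mem_closure hcont hc hmaps
    rwa [hKc.closure_eq] at this
  -- C is commutative
  have hCab : ∀ c ∈ C, ∀ c' ∈ C, c * c' = c' * c := by
    have h1 : ∀ c ∈ C, ∀ m : ℤ, c * s ^ m = s ^ m * c := by
      intro c hc m
      have hcl : IsClosed {x : Z | x * s ^ m = s ^ m * x} :=
        isClosed_eq (by fun_prop) (by fun_prop)
      have hsub : ((Subgroup.zpowers s : Subgroup Z) : Set Z) ⊆
          {x : Z | x * s ^ m = s ^ m * x} := by
        rintro y ⟨n, rfl⟩
        exact ((Commute.refl s).zpow_zpow n m)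
      exact closure_minimal hsub hcl hc
    intro c hc c' hc'
    have hcl : IsClosed {y : Z | c * y = y * c} :=
      isClosed_eq (by fun_prop) (by fun_prop)
    have hsub : ((Subgroup.zpowers s : Subgroup Z) : Set Z) ⊆ {y : Z | c * y = y * c} := by
      rintro y ⟨n, rfl⟩
      exact h1 c hc n
    exact closure_minimal hsub hcl hc'
  -- Z = C * T
  have hD : ∀ z : Z, ∃ c ∈ C, ∃ t ∈ T, z = c * t := by
    set D : Subgroup Z := C ⊔ T with hDdef
    have hDcar : (D : Set Z) = (C : Set Z) * (T : Set Z) := Subgroup.mul_normal C T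
    have hDclosed : IsClosed (D : Set Z) := by
      rw [hDcar]
      exact ((hCc.isCompact).mul (hT.isCompact)).isClosed
    have hDtop : D = ⊤ := by
      have hTD : T ≤ D := le_sup_right
      have hsD : s ∈ D := (le_sup_left : C ≤ D) hsC
      have hmapclosed : IsClosed ((Subgroup.map (QuotientGroup.mk' T) D : Subgroup (Z ⧸ T)) :
          Set (Z ⧸ T)) := by
        have : ((Subgroup.map (QuotientGroup.mk' T) D : Subgroup (Z ⧸ T)) : Set (Z ⧸ T)) =
            (QuotientGroup.mk : Z → Z ⧸ T) '' (D : Set Z) := rfl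
        rw [this]
        exact QuotientGroup.isClosedMap_coe (hT.isCompact) _ hDclosed
      have hle : (Subgroup.closure {((s : Z ⧸ T) : Z ⧸ T)}).topologicalClosure ≤
          Subgroup.map (QuotientGroup.mk' T) D := by
        apply Subgroup.topologicalClosure_minimal _ _ hmapclosed
        rw [Subgroup.closure_le]
        rintro y rfl
        exact ⟨s, hsD, rfl⟩
      rw [hs] at hle
      rw [eq_top_iff]
      intro z _
      obtain ⟨d, hd, hdz⟩ := hle (Subgroup.mem_top ((z : Z ⧸ T)))
      have : d⁻¹ * z ∈ T := by
        rw [← QuotientGroup.eq]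
        exact hdz
      have hz : z = d * (d⁻¹ * z) := by group
      rw [hz]
      exact D.mul_mem hd (hTD this)
    intro z
    have hz : z ∈ D := hDtop ▸ Subgroup.mem_top z
    rw [← SetLike.mem_coe, hDcar] at hz
    obtain ⟨c, hc, t, ht, rfl⟩ := hz
    exact ⟨c, hc, t, ht, rfl⟩
  -- [T, powers of s] ⊆ K
  have hTpow : ∀ t ∈ T, ∀ n : ℤ, ⁅t, s ^ n⁆ ∈ K := by
    intro t ht n
    induction n using Int.induction_on with
    | zero => simpa using K.one_mem
    | succ n ih =>
        have h1 : ⁅t, s ^ ((n : ℤ) + 1)⁆ =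
            ⁅t, s ^ (n : ℤ)⁆ * (s ^ (n : ℤ) * ⁅t, s⁆ * (s ^ (n : ℤ))⁻¹) := by
          rw [zpow_add_one]
          simp only [commutatorElement_def]; group
        rw [h1]
        exact K.mul_mem ih (hKpow n _ (hTs t ht))
    | pred n ih =>
        have h1 : ⁅t, s ^ (-(n : ℤ) - 1)⁆ =
            ⁅t, s ^ (-(n : ℤ))⁆ * (s ^ (-(n : ℤ)) * (s⁻¹ * ⁅t, s⁆⁻¹ * s) * (s ^ (-(n : ℤ)))⁻¹) := by
          rw [zpow_sub_one]
          simp only [commutatorElement_def]; group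
        rw [h1]
        refine K.mul_mem ih (hKpow _ _ ?_)
        have := hKsinv _ (K.inv_mem (hTs t ht))
        simpa using this
  -- [T, C] ⊆ K
  have hTC : ∀ t ∈ T, ∀ c ∈ C, ⁅t, c⁆ ∈ K := by
    intro t ht c hc
    have hcont : Continuous fun y : Z => ⁅t, y⁆ := by
      simp only [commutatorElement_def]; fun_prop
    have hmaps : Set.MapsTo (fun y : Z => ⁅t, y⁆)
        ((Subgroup.zpowers s : Subgroup Z) : Set Z) (K : Set Z) := by
      rintro y ⟨n, rfl⟩
      exact hTpow t ht n
    have := map_mem_closure hcont hc hmaps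
    rwa [hKc.closure_eq] at this
  -- [T, Z] ⊆ K
  have hTZ : ∀ t ∈ T, ∀ z : Z, ⁅t, z⁆ ∈ K := by
    intro t ht z
    obtain ⟨c, hc, t', ht', rfl⟩ := hD z
    have h1 : ⁅t, c * t'⁆ = ⁅t, c⁆ * (c * ⁅t, t'⁆ * c⁻¹) := by
      simp only [commutatorElement_def]; group
    rw [h1]
    exact K.mul_mem (hTC t ht c hc) (hKC c hc _ (hTK t ht t' ht'))
  -- conjugation by T preserves K
  have hKT : ∀ t ∈ T, ∀ x ∈ K, t * x * t⁻¹ ∈ K := by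
    intro t ht
    apply hconjK t
    apply hconjL t
    rintro x (⟨a, ha, b, hb, rfl⟩ | ⟨t₀, ht₀, h, rfl⟩)
    · rw [conj_commEl]
      exact hTK _ (Subgroup.Normal.conj_mem ‹T.Normal› a ha t) _ (Subgroup.Normal.conj_mem ‹T.Normal› b hb t)
    · set x := iterComm s t₀ (h + 1) with hx
      have h1 : t * x * t⁻¹ = x * ⁅t, x⁻¹⁆⁻¹ := by
        simp only [commutatorElement_def]; group
      rw [h1]
      exact K.mul_mem (hIK t₀ ht₀ h) (K.inv_mem (hTZ t ht x⁻¹))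
  -- K is normal
  have hKnormal : ∀ g : Z, ∀ x ∈ K, g * x * g⁻¹ ∈ K := by
    intro g x hx
    obtain ⟨c, hc, t, ht, rfl⟩ := hD g
    have h1 : c * t * x * (c * t)⁻¹ = c * (t * x * t⁻¹) * c⁻¹ := by group
    rw [h1]
    exact hKC c hc _ (hKT t ht x hx)
  -- every commutator lies in K
  have hcomm : ∀ z₁ z₂ : Z, ⁅z₁, z₂⁆ ∈ K := by
    intro z₁ z₂
    obtain ⟨c₁, hc₁, t₁, ht₁, rfl⟩ := hD z₁
    have h1 : ⁅c₁ * t₁, z₂⁆ = c₁ * ⁅t₁, z₂⁆ * c₁⁻¹ * ⁅c₁, z₂⁆ := by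
      simp only [commutatorElement_def]; group
    rw [h1]
    refine K.mul_mem (hKC c₁ hc₁ _ (hTZ t₁ ht₁ z₂)) ?_
    obtain ⟨c₂, hc₂, t₂, ht₂, rfl⟩ := hD z₂
    have h2 : ⁅c₁, c₂ * t₂⁆ = ⁅c₁, c₂⁆ * (c₂ * ⁅c₁, t₂⁆ * c₂⁻¹) := by
      simp only [commutatorElement_def]; group
    have h3 : ⁅c₁, c₂⁆ = 1 := by
      simp only [commutatorElement_def]
      rw [hCab c₁ hc₁ c₂ hc₂]; group
    rw [h2, h3, one_mul]
    refine hKC c₂ hc₂ _ ?_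
    rw [← commutatorElement_inv]
    exact K.inv_mem (hTZ t₂ ht₂ c₁)
  -- conclude
  apply le_antisymm
  · exact Subgroup.topologicalClosure_minimal _
      (by
        rw [commutator_eq_closure, Subgroup.closure_le]
        rintro x ⟨g₁, g₂, rfl⟩
        exact hcomm g₁ g₂) hKc
  · refine Subgroup.topologicalClosure_minimal _ ?_ ((commutator Z).isClosed_topologicalClosure)
    refine le_trans ?_ ((commutator Z).le_topologicalClosure)
    rw [Subgroup.closure_le, commutator_eq_closure]
    rintro x (⟨a, _, b, _, rfl⟩ | ⟨t, _, h, rfl⟩)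
    · exact Subgroup.subset_closure ⟨a, b, rfl⟩
    · exact Subgroup.subset_closure ⟨iterComm s t h, s, rfl⟩
end
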